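/- arXiv:2307.05558 — 2 statements merged into one kernel-verified Lean document; each statement's English description precedes it below -/
import Mathlib

section
/- For λ > 0 and any real β, the Laplace density satisfies (λ/2)·exp(-λ|β|) = ∫₀^∞ (1/√(2πs))·exp(-β²/(2s)) · (λ²/2)·exp(-λ² s/2) ds, i.e., the Laplace distribution is a scale mixture of centered normals with exponentially distributed variance. -/
/-!
Substituting `s = t²` turns the mixture into `λ² / √(2π) · ∫₀^∞ exp (-(a/t)² - (b t)²) dt` with
`a = |β| / √2`, `b = λ / √2`. Completing the square, `-(a/t)² - (b t)² = -(b t - a/t)² - 2ab`, and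
`∫₀^∞ exp (-(b t - a/t)²) dt = √π / (2b)` by the Cauchy–Schlömilch substitution `u = b t - a/t`:
the inverse substitution has derivative `(1 + u / √(u² + 4ab)) / (2b)`, whose odd part integrates
to zero against `exp (-u²)`.
-/

open MeasureTheory Real Set

theorem integral_Ioi_comp_sq {E : Type*} [NormedAddCommGroup E] [NormedSpace ℝ E]
    (g : ℝ → E) : ∫ t in Ioi 0, (2 * t) • g (t ^ 2) = ∫ s in Ioi 0, g s := by
  rw [← integral_comp_rpow_Ioi_of_pos (g := g) two_pos]
  refine setIntegral_congr_fun measurableSet_Ioi fun t _ => ?_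
  norm_num only [rpow_two, rpow_one]

theorem integral_exp_neg_sq_mul_div_sqrt_sq_add_eq_zero (c : ℝ) :
    ∫ u : ℝ, exp (-u ^ 2) * (u / √(u ^ 2 + c)) = 0 := by
  have h := integral_neg_eq_self (fun u : ℝ => exp (-u ^ 2) * (u / √(u ^ 2 + c))) volume
  simp only [neg_sq, neg_div, mul_neg, integral_neg] at h
  linarith

theorem integrable_exp_neg_sq_mul_div_sqrt_sq_add {c : ℝ} (hc : 0 ≤ c) :
    Integrable fun u : ℝ => exp (-u ^ 2) * (u / √(u ^ 2 + c)) := by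
  have hgauss : Integrable fun u : ℝ => exp (-u ^ 2) := by
    simpa using integrable_exp_neg_mul_sq one_pos
  refine hgauss.mono (by fun_prop) (ae_of_all _ fun u => ?_)
  have hu : |u / √(u ^ 2 + c)| ≤ 1 := by
    rw [abs_div, abs_of_nonneg (sqrt_nonneg _)]
    exact div_le_one_of_le₀ (abs_le_sqrt (by linarith)) (sqrt_nonneg _)
  simp only [norm_mul, norm_eq_abs, abs_exp]
  exact mul_le_of_le_one_right (exp_pos _).le hu

theorem integral_exp_neg_sq_mul_one_add_div_sqrt_sq_add {c : ℝ} (hc : 0 ≤ c) :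
    ∫ u : ℝ, exp (-u ^ 2) * (1 + u / √(u ^ 2 + c)) = √π := by
  have hgauss : ∫ u : ℝ, exp (-u ^ 2) = √π := by simpa using integral_gaussian 1
  simp only [mul_add, mul_one]
  rw [integral_add (by simpa using integrable_exp_neg_mul_sq one_pos)
    (integrable_exp_neg_sq_mul_div_sqrt_sq_add hc),
    integral_exp_neg_sq_mul_div_sqrt_sq_add_eq_zero, hgauss, add_zero]

theorem hasDerivAt_mul_sub_div (a b : ℝ) {t : ℝ} (ht : t ≠ 0) :
    HasDerivAt (fun t => b * t - a / t) (b + a / t ^ 2) t := by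
  simp only [div_eq_mul_inv]
  exact (((hasDerivAt_id' t).const_mul b).sub ((hasDerivAt_inv ht).const_mul a)).congr_deriv
    (by ring)

theorem strictMonoOn_mul_sub_div {a b : ℝ} (ha : 0 ≤ a) (hb : 0 < b) :
    StrictMonoOn (fun t => b * t - a / t) (Ioi 0) := by
  intro s (hs : 0 < s) t (ht : 0 < t) hst
  have : a / t ≤ a / s := div_le_div_of_nonneg_left ha hs hst.le
  have : b * s < b * t := mul_lt_mul_of_pos_left hst hb
  dsimp only
  linarith

theorem image_mul_sub_div_Ioi {a b : ℝ} (ha : 0 < a) (hb : 0 < b) :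
    (fun t => b * t - a / t) '' Ioi 0 = univ := by
  refine eq_univ_of_forall fun u => ?_
  -- the positive root of b t² - u t - a = 0
  set r := √(u ^ 2 + 4 * a * b)
  have hr : r ^ 2 = u ^ 2 + 4 * a * b := sq_sqrt (by positivity)
  have hur : 0 < u + r := by
    have : |u| < r := (lt_sqrt (abs_nonneg u)).2 (by rw [sq_abs]; linarith [mul_pos ha hb])
    linarith [neg_le_abs u]
  refine ⟨(u + r) / (2 * b), div_pos hur (by positivity), ?_⟩
  dsimp only
  field_simp
  nlinarith

theorem sqrt_sq_mul_sub_div_add {a b t : ℝ} (ha : 0 ≤ a) (hb : 0 ≤ b) (ht : 0 < t) :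
    √((b * t - a / t) ^ 2 + 4 * a * b) = b * t + a / t := by
  rw [show (b * t - a / t) ^ 2 + 4 * a * b = (b * t + a / t) ^ 2 by field_simp; ring]
  exact sqrt_sq (by positivity)

theorem integral_Ioi_exp_neg_sq_mul_sub_div {a b : ℝ} (ha : 0 ≤ a) (hb : 0 < b) :
    ∫ t in Ioi 0, exp (-(b * t - a / t) ^ 2) = √π / (2 * b) := by
  rcases ha.eq_or_lt with rfl | ha
  · simp_rw [zero_div, sub_zero, mul_pow, ← neg_mul]
    rw [integral_gaussian_Ioi, sqrt_div pi_pos.le, sqrt_sq hb.le, div_div, mul_comm b]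
  -- `g` is `exp (-u ^ 2)` times the derivative of the inverse of `t ↦ b * t - a / t`
  set g : ℝ → ℝ := fun u => exp (-u ^ 2) * (1 + u / √(u ^ 2 + 4 * a * b)) / (2 * b)
  have hg : ∀ t ∈ Ioi (0 : ℝ),
      |b + a / t ^ 2| • g (b * t - a / t) = exp (-(b * t - a / t) ^ 2) := by
    intro t (ht : 0 < t)
    simp only [g, smul_eq_mul, sqrt_sq_mul_sub_div_add ha.le hb.le ht,
      abs_of_pos (by positivity : 0 < b + a / t ^ 2)]
    field_simp
    ring
  calc ∫ t in Ioi 0, exp (-(b * t - a / t) ^ 2)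
      = ∫ t in Ioi 0, |b + a / t ^ 2| • g (b * t - a / t) :=
        (setIntegral_congr_fun measurableSet_Ioi hg).symm
    _ = ∫ u, g u := by
        rw [← integral_image_eq_integral_abs_deriv_smul measurableSet_Ioi
          (fun t (ht : 0 < t) => (hasDerivAt_mul_sub_div a b ht.ne').hasDerivWithinAt)
          (strictMonoOn_mul_sub_div ha.le hb).injOn, image_mul_sub_div_Ioi ha hb,
          setIntegral_univ]
    _ = √π / (2 * b) := by
        rw [integral_div, integral_exp_neg_sq_mul_one_add_div_sqrt_sq_add (by positivity)]

theorem integral_Ioi_exp_neg_div_sq_sub_mul_sq {a b : ℝ} (ha : 0 ≤ a) (hb : 0 < b) :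
    ∫ t in Ioi 0, exp (-(a / t) ^ 2 - (b * t) ^ 2) = √π / (2 * b) * exp (-(2 * a * b)) := by
  have h : ∀ t ∈ Ioi (0 : ℝ), exp (-(a / t) ^ 2 - (b * t) ^ 2) =
      exp (-(b * t - a / t) ^ 2) * exp (-(2 * a * b)) := by
    intro t (ht : 0 < t)
    rw [← exp_add]
    congr 1
    field_simp
    ring
  rw [setIntegral_congr_fun measurableSet_Ioi h, integral_mul_const,
    integral_Ioi_exp_neg_sq_mul_sub_div ha hb]

theorem laplace_scale_mixture_of_normals (lam β : ℝ) (hlam : 0 < lam) :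
    (lam / 2) * Real.exp (-lam * |β|) =
      ∫ s in Set.Ioi (0 : ℝ),
        (1 / Real.sqrt (2 * π * s)) * Real.exp (-β ^ 2 / (2 * s)) *
          ((lam ^ 2 / 2) * Real.exp (-lam ^ 2 * s / 2)) := by
  have hsqrt2 : √2 ^ 2 = 2 := sq_sqrt zero_le_two
  set a := |β| / √2
  set b := lam / √2
  have hab : 2 * a * b = lam * |β| := by
    simp only [a, b]
    field_simp
    rw [hsqrt2]
    ring
  have hconst : lam ^ 2 / √(2 * π) * (√π / (2 * b)) = lam / 2 := by
    simp only [b]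
    rw [sqrt_mul zero_le_two]
    field_simp
  have hexp : ∀ t, -(a / t) ^ 2 - (b * t) ^ 2 = -β ^ 2 / (2 * t ^ 2) + -lam ^ 2 * t ^ 2 / 2 := by
    intro t
    simp only [a, b, div_pow, mul_pow, sq_abs, hsqrt2]
    ring
  have hintegrand : ∀ t ∈ Ioi (0 : ℝ),
      (2 * t) • ((1 / √(2 * π * t ^ 2)) * exp (-β ^ 2 / (2 * t ^ 2)) *
        ((lam ^ 2 / 2) * exp (-lam ^ 2 * t ^ 2 / 2))) =
      lam ^ 2 / √(2 * π) * exp (-(a / t) ^ 2 - (b * t) ^ 2) := by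
    intro t (ht : 0 < t)
    rw [smul_eq_mul, sqrt_mul (by positivity), sqrt_sq ht.le, hexp, exp_add]
    field_simp
  rw [← integral_Ioi_comp_sq, setIntegral_congr_fun measurableSet_Ioi hintegrand,
    integral_const_mul, integral_Ioi_exp_neg_div_sq_sub_mul_sq (by positivity) (by positivity),
    ← mul_assoc, hconst, hab, neg_mul]
end

section
/- If a probability measure π on ℝ^p has finite second moment, then the map θ ↦ E_{p_{t,θ}}[β], the mean of the exponentially tilted measure p_{t,θ}(dβ) ∝ exp(θᵀβ - (t/2)‖β‖²) π(dβ), is Lipschitz in θ with Lipschitz constant at most E_{p_{t,θ}}[‖β‖²] (pointwise: its Jacobian is the covariance matrix of p_{t,θ}, whose operator norm is bounded by the second moment of p_{t,θ}). -/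
open MeasureTheory Real
open scoped RealInnerProductSpace

/-- The exponentially tilted measure `p_{t,θ}(dβ) ∝ exp(⟪θ,β⟫ - (t/2)‖β‖²) μ(dβ)`. -/
noncomputable def tiltedMeasure {p : ℕ} (μ : Measure (EuclideanSpace ℝ (Fin p))) (t : ℝ)
    (θ : EuclideanSpace ℝ (Fin p)) : Measure (EuclideanSpace ℝ (Fin p)) :=
  (ENNReal.ofReal (∫ β, Real.exp (⟪θ, β⟫ - t / 2 * ‖β‖ ^ 2) ∂μ))⁻¹ •
    μ.withDensity (fun β => ENNReal.ofReal (Real.exp (⟪θ, β⟫ - t / 2 * ‖β‖ ^ 2)))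

/-- Barycenter of the tilted measure. -/
noncomputable def tiltedMean {p : ℕ} (μ : Measure (EuclideanSpace ℝ (Fin p))) (t : ℝ)
    (θ : EuclideanSpace ℝ (Fin p)) : EuclideanSpace ℝ (Fin p) :=
  ∫ β, β ∂(tiltedMeasure μ t θ)

open ProbabilityTheory

/-!
Write the tilted mean as `N θ / Z θ`, where `Z θ = ∫ exp (⟪θ, β⟫ - t/2 ‖β‖²) dμ` and
`N θ = ∫ exp (⟪θ, β⟫ - t/2 ‖β‖²) β dμ`. For `t > 0` the weight is at most `exp (‖θ‖² / (2t))`,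
uniformly for `θ` in a ball, so a finite second moment lets us differentiate `Z` and `N` under the
integral sign: `Z' = Z ⟪m, ·⟫` and `N' = Z · (uncentered second-moment operator of p_{t,θ})`,
with `m` the tilted mean. The quotient rule then identifies the Jacobian with the covariance
operator `v ↦ E[⟪v, β - m⟫ (β - m)]` of `p_{t,θ}`, whose norm is at most
`E ‖β - m‖² = E ‖β‖² - ‖m‖² ≤ E ‖β‖²`.
-/

section CenteredCovariance

variable {E : Type*} [NormedAddCommGroup E] [InnerProductSpace ℝ E] [CompleteSpace E]
  [MeasurableSpace E] {ν : Measure E}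

lemma integral_norm_sub_integral_sq [IsProbabilityMeasure ν] (hν : MemLp id 2 ν) :
    ∫ β, ‖β - ∫ x, x ∂ν‖ ^ 2 ∂ν = ∫ β, ‖β‖ ^ 2 ∂ν - ‖∫ x, x ∂ν‖ ^ 2 := by
  set m := ∫ x, x ∂ν
  have hsq : Integrable (fun β : E => ‖β‖ ^ 2) ν := hν.integrable_norm_pow two_ne_zero
  have hid : Integrable (fun β : E => β) ν := hν.integrable one_le_two
  have hinner : Integrable (fun β => 2 * ⟪m, β⟫) ν := (hid.const_inner m).const_mul 2
  simp_rw [norm_sub_sq_real, real_inner_comm m]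
  rw [integral_add (f := fun β => ‖β‖ ^ 2 - 2 * ⟪m, β⟫) (hsq.sub hinner) (integrable_const _),
    integral_sub hsq hinner, integral_const_mul, integral_inner hid, real_inner_self_eq_norm_sq,
    integral_const, probReal_univ, one_smul]
  ring

variable [BorelSpace E]

/-- Mathlib's `covarianceOperator` is the uncentered second-moment operator. -/
noncomputable def centeredCovarianceOperator (ν : Measure E) : E →L[ℝ] E :=
  covarianceOperator ν - (innerSL ℝ (∫ x, x ∂ν)).smulRight (∫ x, x ∂ν)

lemma integral_innerSL_smulRight_self (hν : MemLp id 2 ν) :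
    ∫ β, (innerSL ℝ β).smulRight β ∂ν = covarianceOperator ν := by
  have hint : Integrable (fun β => (innerSL ℝ β).smulRight β) ν :=
    (hν.integrable_norm_pow two_ne_zero).mono'
      (((ContinuousLinearMap.smulRightL ℝ E E).comp (innerSL ℝ)).aestronglyMeasurable_comp₂
        hν.1 hν.1)
      (.of_forall fun β => by simp [ContinuousLinearMap.norm_smulRight_apply, sq])
  ext v
  rw [ContinuousLinearMap.integral_apply hint, covarianceOperator_apply hν]
  simp [real_inner_comm]

variable [IsProbabilityMeasure ν]

lemma centeredCovarianceOperator_apply (hν : MemLp id 2 ν) (v : E) :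
    centeredCovarianceOperator ν v
      = ∫ β, ⟪v, β - ∫ x, x ∂ν⟫ • (β - ∫ x, x ∂ν) ∂ν := by
  set m := ∫ x, x ∂ν
  have hid : Integrable (fun β : E => β) ν := hν.integrable one_le_two
  have hsmul : Integrable (fun β => ⟪v, β⟫ • β) ν :=
    memLp_one_iff_integrable.1 <| hν.smul (hν.const_inner v)
  calc _ = ∫ β, ⟪v, β⟫ • β ∂ν - ⟪v, m⟫ • m := by
        rw [centeredCovarianceOperator, sub_apply, covarianceOperator_apply hν,
          ContinuousLinearMap.smulRight_apply, innerSL_apply_apply, real_inner_comm]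
    _ = ∫ β, ⟪v, β - m⟫ • (β - m) ∂ν := by
        have h₁ : Integrable (fun β => ⟪v, β⟫ • m) ν := (hid.const_inner v).smul_const m
        have h₂ : Integrable (fun β => ⟪v, m⟫ • β) ν := hid.smul _
        simp_rw [inner_sub_right, sub_smul, smul_sub]
        rw [integral_sub (f := fun β => ⟪v, β⟫ • β - ⟪v, β⟫ • m)
            (g := fun β => ⟪v, m⟫ • β - ⟪v, m⟫ • m) (hsmul.sub h₁)
            (h₂.sub (integrable_const _)), integral_sub hsmul h₁,
          integral_sub h₂ (integrable_const _), integral_smul_const, integral_inner hid,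
          integral_smul, integral_const, probReal_univ, one_smul]
        abel

lemma norm_centeredCovarianceOperator_le (hν : MemLp id 2 ν) :
    ‖centeredCovarianceOperator ν‖ ≤ ∫ β, ‖β‖ ^ 2 ∂ν := by
  refine ContinuousLinearMap.opNorm_le_bound _ (integral_nonneg fun β => by positivity)
    fun v => ?_
  have hcentered : MemLp (fun β => β - ∫ x, x ∂ν) 2 ν := hν.sub (memLp_const _)
  calc _ = ‖∫ β, ⟪v, β - ∫ x, x ∂ν⟫ • (β - ∫ x, x ∂ν) ∂ν‖ := by
        rw [centeredCovarianceOperator_apply hν]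
    _ ≤ ∫ β, ‖v‖ * ‖β - ∫ x, x ∂ν‖ ^ 2 ∂ν := by
        refine norm_integral_le_of_norm_le
          ((hcentered.integrable_norm_pow two_ne_zero).const_mul _) (.of_forall fun β => ?_)
        rw [norm_smul, pow_two, ← mul_assoc]
        gcongr
        exact norm_inner_le_norm _ _
    _ = ‖v‖ * (∫ β, ‖β‖ ^ 2 ∂ν - ‖∫ x, x ∂ν‖ ^ 2) := by
        rw [integral_const_mul, integral_norm_sub_integral_sq hν]
    _ ≤ (∫ β, ‖β‖ ^ 2 ∂ν) * ‖v‖ := by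
        rw [mul_comm]; gcongr; linarith [sq_nonneg ‖∫ x, x ∂ν‖]

end CenteredCovariance

section TiltedIntegral

variable {α : Type*} [MeasurableSpace α] {μ : Measure α} [NeZero μ] {f : α → ℝ}
  {F : Type*} [NormedAddCommGroup F] [NormedSpace ℝ F]

lemma integral_exp_smul_eq_smul_integral_tilted (hf : Integrable (fun x => exp (f x)) μ)
    (g : α → F) :
    ∫ x, exp (f x) • g x ∂μ = (∫ x, exp (f x) ∂μ) • ∫ x, g x ∂μ.tilted f := by
  rw [integral_tilted, ← integral_smul]
  simp_rw [smul_smul, mul_div_cancel₀ _ (integral_exp_pos hf).ne']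

end TiltedIntegral

section Tilting

variable {E : Type*} [NormedAddCommGroup E] [InnerProductSpace ℝ E]

noncomputable def tiltExponent (t : ℝ) (θ β : E) : ℝ := ⟪θ, β⟫ - t / 2 * ‖β‖ ^ 2

lemma continuous_tiltExponent (t : ℝ) (θ : E) : Continuous (tiltExponent t θ) := by
  unfold tiltExponent; fun_prop

lemma tiltExponent_le {t r : ℝ} (ht : 0 < t) {θ : E} (hθ : ‖θ‖ ≤ r) (β : E) :
    tiltExponent t θ β ≤ r ^ 2 / (2 * t) := by
  rw [tiltExponent, le_div_iff₀ (by positivity)]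
  nlinarith [real_inner_le_norm θ β, sq_nonneg (t * ‖β‖ - ‖θ‖),
    pow_le_pow_left₀ (norm_nonneg θ) hθ 2, norm_nonneg β]

lemma hasFDerivAt_exp_tiltExponent (t : ℝ) (θ β : E) :
    HasFDerivAt (fun θ => exp (tiltExponent t θ β)) (exp (tiltExponent t θ β) • innerSL ℝ β) θ := by
  have h := ((innerSL ℝ β).hasFDerivAt (x := θ)).sub_const (t / 2 * ‖β‖ ^ 2)
  simp only [innerSL_apply_apply] at h
  simpa only [tiltExponent, real_inner_comm β] using h.exp

variable {F : Type*} [NormedAddCommGroup F] [NormedSpace ℝ F]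
  [MeasurableSpace E] [BorelSpace E] {μ : Measure E} {t : ℝ}

lemma integrable_exp_tiltExponent_smul (ht : 0 < t) (θ : E) {g : E → F} (hg : Integrable g μ) :
    Integrable (fun β => exp (tiltExponent t θ β) • g β) μ :=
  hg.bdd_smul (exp (‖θ‖ ^ 2 / (2 * t))) (continuous_tiltExponent t θ).rexp.aestronglyMeasurable
    (.of_forall fun β => by
      rw [norm_of_nonneg (exp_pos _).le]
      exact exp_le_exp.2 (tiltExponent_le ht le_rfl β))

lemma integrable_exp_tiltExponent [IsFiniteMeasure μ] (ht : 0 < t) (θ : E) :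
    Integrable (fun β => exp (tiltExponent t θ β)) μ := by
  simpa using integrable_exp_tiltExponent_smul ht θ (integrable_const (1 : ℝ))

variable [SecondCountableTopology E]

lemma hasFDerivAt_integral_exp_tiltExponent_smul (ht : 0 < t) {g : E → F} (hg : Integrable g μ)
    (hg' : Integrable (fun β => ‖β‖ * ‖g β‖) μ) (θ : E) :
    HasFDerivAt (fun θ => ∫ β, exp (tiltExponent t θ β) • g β ∂μ)
      (∫ β, exp (tiltExponent t θ β) • (innerSL ℝ β).smulRight (g β) ∂μ) θ := by
  refine hasFDerivAt_integral_of_dominated_of_fderiv_le (Metric.ball_mem_nhds θ one_pos)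
    (F' := fun x β => exp (tiltExponent t x β) • (innerSL ℝ β).smulRight (g β))
    (.of_forall fun x => (integrable_exp_tiltExponent_smul ht x hg).aestronglyMeasurable)
    (integrable_exp_tiltExponent_smul ht θ hg) ?_
    (bound := fun β => exp ((‖θ‖ + 1) ^ 2 / (2 * t)) * (‖β‖ * ‖g β‖)) ?_ (hg'.const_mul _)
    (.of_forall fun β x _ => ?_)
  · exact (continuous_tiltExponent t θ).rexp.aestronglyMeasurable.smul
      (((ContinuousLinearMap.smulRightL ℝ E F).comp (innerSL ℝ)).aestronglyMeasurable_comp₂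
        aestronglyMeasurable_id hg.1)
  · refine .of_forall fun β x hx => ?_
    have hx' : ‖x‖ ≤ ‖θ‖ + 1 := by
      linarith [norm_le_norm_add_norm_sub' x θ, (mem_ball_iff_norm.1 hx).le]
    rw [norm_smul, ContinuousLinearMap.norm_smulRight_apply, innerSL_apply_norm,
      norm_of_nonneg (exp_pos _).le]
    gcongr
    exact tiltExponent_le ht hx' β
  · convert (hasFDerivAt_exp_tiltExponent t x β).smul_const (g β) using 1
    ext
    simp [smul_smul]

end Tilting

section TiltedMean

variable {E : Type*} [NormedAddCommGroup E] [InnerProductSpace ℝ E] [MeasurableSpace E]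
  [BorelSpace E] {μ : Measure E} [IsFiniteMeasure μ] {t : ℝ}

lemma memLp_two_tilted_tiltExponent (ht : 0 < t) (hμ : MemLp id 2 μ) (θ : E) :
    MemLp id 2 (μ.tilted (tiltExponent t θ)) := by
  rw [memLp_two_iff_integrable_sq_norm (hμ.1.mono_ac (tilted_absolutelyContinuous _ _)),
    integrable_tilted_iff (integrable_exp_tiltExponent ht θ)]
  exact integrable_exp_tiltExponent_smul ht θ (hμ.integrable_norm_pow two_ne_zero)

variable [NeZero μ]

lemma integral_id_tilted_tiltExponent (ht : 0 < t) (θ : E) :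
    ∫ β, β ∂μ.tilted (tiltExponent t θ)
      = (∫ β, exp (tiltExponent t θ β) ∂μ)⁻¹ • ∫ β, exp (tiltExponent t θ β) • β ∂μ := by
  rw [integral_exp_smul_eq_smul_integral_tilted (integrable_exp_tiltExponent ht θ),
    inv_smul_smul₀ (integral_exp_pos (integrable_exp_tiltExponent ht θ)).ne']

variable [CompleteSpace E] [SecondCountableTopology E]

lemma hasFDerivAt_integral_exp_tiltExponent (ht : 0 < t) (hμ : MemLp id 2 μ) (θ : E) :
    HasFDerivAt (fun θ => ∫ β, exp (tiltExponent t θ β) ∂μ)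
      ((∫ β, exp (tiltExponent t θ β) ∂μ) • innerSL ℝ (∫ β, β ∂μ.tilted (tiltExponent t θ))) θ := by
  have h := hasFDerivAt_integral_exp_tiltExponent_smul ht (integrable_const (1 : ℝ))
    (by simpa using (hμ.integrable one_le_two).norm) θ
  simp only [smul_eq_mul, mul_one] at h
  refine h.congr_fderiv ?_
  have hm : ∫ β, innerSL ℝ β ∂μ.tilted (tiltExponent t θ)
      = innerSL ℝ (∫ β, β ∂μ.tilted (tiltExponent t θ)) :=
    (innerSL ℝ).integral_comp_comm ((memLp_two_tilted_tiltExponent ht hμ θ).integrable one_le_two)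
  rw [integral_exp_smul_eq_smul_integral_tilted (integrable_exp_tiltExponent ht θ), ← hm]
  congr 2
  ext β v
  simp

lemma hasFDerivAt_integral_exp_tiltExponent_smul_self (ht : 0 < t) (hμ : MemLp id 2 μ) (θ : E) :
    HasFDerivAt (fun θ => ∫ β, exp (tiltExponent t θ β) • β ∂μ)
      ((∫ β, exp (tiltExponent t θ β) ∂μ) • covarianceOperator (μ.tilted (tiltExponent t θ)))
      θ := by
  refine (hasFDerivAt_integral_exp_tiltExponent_smul (g := fun β => β) ht
    (hμ.integrable one_le_two) (by simpa [sq] using hμ.integrable_norm_pow two_ne_zero)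
    θ).congr_fderiv ?_
  rw [integral_exp_smul_eq_smul_integral_tilted (integrable_exp_tiltExponent ht θ),
    integral_innerSL_smulRight_self (memLp_two_tilted_tiltExponent ht hμ θ)]

theorem hasFDerivAt_integral_id_tilted_tiltExponent (ht : 0 < t) (hμ : MemLp id 2 μ) (θ : E) :
    HasFDerivAt (fun θ => ∫ β, β ∂μ.tilted (tiltExponent t θ))
      (centeredCovarianceOperator (μ.tilted (tiltExponent t θ))) θ := by
  have hZ := hasFDerivAt_integral_exp_tiltExponent ht hμ θ
  have hN := hasFDerivAt_integral_exp_tiltExponent_smul_self ht hμ θ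
  have hZθ := (integral_exp_pos (integrable_exp_tiltExponent (μ := μ) ht θ)).ne'
  have hNθ := integral_exp_smul_eq_smul_integral_tilted
    (integrable_exp_tiltExponent (μ := μ) ht θ) (fun β => β)
  simp_rw [integral_id_tilted_tiltExponent ht]
  refine (((hasDerivAt_inv hZθ).comp_hasFDerivAt θ hZ).smul hN).congr_fderiv ?_
  rw [centeredCovarianceOperator, hNθ, sub_eq_add_neg]
  congr 1
  · exact inv_smul_smul₀ hZθ _
  · ext v
    simp only [smul_smul, neg_mul, neg_smul, ContinuousLinearMap.smulRight_apply, neg_apply,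
      smul_apply, coe_innerSL_apply, smul_eq_mul, neg_inj]
    field_simp

end TiltedMean

lemma tiltedMeasure_eq_tilted {p : ℕ} {μ : Measure (EuclideanSpace ℝ (Fin p))} [IsFiniteMeasure μ]
    [NeZero μ] {t : ℝ} (ht : 0 < t) (θ : EuclideanSpace ℝ (Fin p)) :
    tiltedMeasure μ t θ = μ.tilted (tiltExponent t θ) := by
  have hZ := integral_exp_pos (integrable_exp_tiltExponent (μ := μ) ht θ)
  change (ENNReal.ofReal (∫ β, exp (tiltExponent t θ β) ∂μ))⁻¹ •
      μ.withDensity (fun β => ENNReal.ofReal (exp (tiltExponent t θ β))) = _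
  rw [Measure.tilted, ← withDensity_smul' _ _ (ENNReal.inv_ne_top.2 (ENNReal.ofReal_pos.2 hZ).ne')]
  congr 1
  funext β
  rw [Pi.smul_apply, smul_eq_mul, ENNReal.ofReal_div_of_pos hZ, div_eq_mul_inv, mul_comm]

theorem tilted_mean_lipschitz (p : ℕ) (μ : Measure (EuclideanSpace ℝ (Fin p)))
    [IsProbabilityMeasure μ] (t : ℝ) (ht : 0 < t)
    (hmom : Integrable (fun β => ‖β‖ ^ 2) μ) :
    ∀ θ : EuclideanSpace ℝ (Fin p),
      ∃ D : EuclideanSpace ℝ (Fin p) →L[ℝ] EuclideanSpace ℝ (Fin p),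
        HasFDerivAt (tiltedMean μ t) D θ ∧
          ‖D‖ ≤ ∫ β, ‖β‖ ^ 2 ∂(tiltedMeasure μ t θ) := by
  intro θ
  have hμ : MemLp id 2 μ := (memLp_two_iff_integrable_sq_norm aestronglyMeasurable_id).2 hmom
  have hmean : tiltedMean μ t = fun θ => ∫ β, β ∂μ.tilted (tiltExponent t θ) := by
    funext θ
    rw [tiltedMean, tiltedMeasure_eq_tilted ht]
  have := isProbabilityMeasure_tilted (integrable_exp_tiltExponent (μ := μ) ht θ)
  refine ⟨_, hmean ▸ hasFDerivAt_integral_id_tilted_tiltExponent ht hμ θ, ?_⟩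
  rw [tiltedMeasure_eq_tilted ht]
  exact norm_centeredCovarianceOperator_le (memLp_two_tilted_tiltExponent ht hμ θ)
end
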